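/- arXiv:2503.01723 — 2 statements merged into one kernel-verified Lean document; each statement's English description precedes it below -/
import Mathlib

section
/- Let A ∈ {0,1}^{N×N} be an adjacency matrix and suppose there exist X, Y ∈ ℝ^{N×D} and β ∈ ℝ such that for all i, j: A_{ij} = 1 ↔ β − ‖x_i − y_j‖ > 0 and A_{ij} = 0 ↔ β − ‖x_i − y_j‖ < 0 (where x_i, y_j are the rows of X, Y). Then there exist X', Y' ∈ ℝ^{N×(D+2)} such that for all i, j: A_{ij} = 1 ↔ ⟨x'_i, y'_j⟩ > 0 and A_{ij} = 0 ↔ ⟨x'_i, y'_j⟩ < 0. That is, an exact latent-distance embedding of dimension D yields an exact LPCA (inner-product sign) embedding of dimension D + 2. -/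
open Matrix
open scoped RealInnerProductSpace

noncomputable def LPCAx {N D : ℕ} (X : Fin N → EuclideanSpace ℝ (Fin D)) (β : ℝ)
    (i : Fin N) : EuclideanSpace ℝ (Fin (D + 2)) :=
  WithLp.toLp 2 (Fin.snoc (Fin.snoc (fun k => 2 * X i k) (β ^ 2 - ‖X i‖ ^ 2)) 1 : Fin (D + 2) → ℝ)

noncomputable def LPCAy {N D : ℕ} (Y : Fin N → EuclideanSpace ℝ (Fin D))
    (j : Fin N) : EuclideanSpace ℝ (Fin (D + 2)) :=
  WithLp.toLp 2 (Fin.snoc (Fin.snoc (fun k => Y j k) (1 : ℝ)) (-‖Y j‖ ^ 2) : Fin (D + 2) → ℝ)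

def LPCAnegone {D : ℕ} : EuclideanSpace ℝ (Fin (D + 2)) := WithLp.toLp 2 (fun _ => (-1 : ℝ))
def LPCAone {D : ℕ} : EuclideanSpace ℝ (Fin (D + 2)) := WithLp.toLp 2 (fun _ => (1 : ℝ))

theorem stmt_4 {N D : ℕ} (A : Matrix (Fin N) (Fin N) ℝ)
    (hA : ∀ i j, A i j = 0 ∨ A i j = 1)
    (X Y : Fin N → EuclideanSpace ℝ (Fin D)) (β : ℝ)
    (h : ∀ i j, (A i j = 1 ↔ β - ‖X i - Y j‖ > 0) ∧ (A i j = 0 ↔ β - ‖X i - Y j‖ < 0)) :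
    ∃ X' Y' : Fin N → EuclideanSpace ℝ (Fin (D + 2)),
      ∀ i j, (A i j = 1 ↔ ⟪X' i, Y' j⟫ > 0) ∧ (A i j = 0 ↔ ⟪X' i, Y' j⟫ < 0) := by
  by_cases hβ : 0 ≤ β
  · refine ⟨LPCAx X β, LPCAy Y, fun i j => ?_⟩
    have hinner : ⟪LPCAx X β i, LPCAy Y j⟫ = β ^ 2 - ‖X i - Y j‖ ^ 2 := by
      rw [PiLp.inner_apply]
      unfold LPCAx LPCAy
      simp only [RCLike.inner_apply, starRingEnd_apply, star_trivial, PiLp.toLp_apply]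
      rw [Fin.sum_univ_castSucc, Fin.sum_univ_castSucc]
      simp only [Fin.snoc_castSucc, Fin.snoc_last]
      have hxy : ∑ k : Fin D, Y j k * (2 * X i k) = 2 * ⟪X i, Y j⟫ := by
        rw [PiLp.inner_apply, Finset.mul_sum]
        refine Finset.sum_congr rfl fun k _ => ?_
        simp only [RCLike.inner_apply, starRingEnd_apply, star_trivial]
        ring
      rw [hxy]
      have hns : ‖X i - Y j‖ ^ 2 = ‖X i‖ ^ 2 - 2 * ⟪X i, Y j⟫ + ‖Y j‖ ^ 2 :=
        norm_sub_sq_real (X i) (Y j)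
      rw [hns]; ring
    rw [hinner]
    have hd : 0 ≤ ‖X i - Y j‖ := norm_nonneg _
    rcases hA i j with h0 | h1
    · have hlt : β - ‖X i - Y j‖ < 0 := (h i j).2.mp h0
      have hsum : 0 < β + ‖X i - Y j‖ := by
        rcases lt_or_eq_of_le hβ with hb | hb
        · linarith
        · have : 0 < ‖X i - Y j‖ := by linarith
          linarith
      constructor
      · constructor
        · intro h1'; rw [h0] at h1'; norm_num at h1'
        · intro hpos; nlinarith
      · constructor
        · intro _; nlinarith
        · intro _; exact h0
    · have hgt : β - ‖X i - Y j‖ > 0 := (h i j).1.mp h1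
      have hsum : 0 < β + ‖X i - Y j‖ := by linarith
      constructor
      · constructor
        · intro _; nlinarith
        · intro _; exact h1
      · constructor
        · intro h0'; rw [h1] at h0'; norm_num at h0'
        · intro hneg; nlinarith
  · -- β < 0 : all entries are 0
    push_neg at hβ
    refine ⟨fun _ => LPCAnegone, fun _ => LPCAone, fun i j => ?_⟩
    have hA0 : A i j = 0 := by
      rcases hA i j with h0 | h1
      · exact h0
      · have := (h i j).1.mp h1
        have := norm_nonneg (X i - Y j)
        linarith
    have hin : ⟪(LPCAnegone : EuclideanSpace ℝ (Fin (D + 2))), LPCAone⟫ = -(D + 2 : ℝ) := by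
      rw [PiLp.inner_apply]
      unfold LPCAnegone LPCAone
      simp [Finset.sum_const]
    rw [hin, hA0]
    constructor
    · constructor
      · intro h1'; norm_num at h1'
      · intro hpos; exfalso; have : (0:ℝ) < (D:ℝ) + 2 := by positivity
        linarith
    · constructor
      · intro _; have : (0:ℝ) < (D:ℝ) + 2 := by positivity
        linarith
      · intro _; rfl
end

section
/- Let D*_{LPCA}(A) denote the minimal D such that there exist X, Y ∈ ℝ^{N×D} with sign(⟨x_i, y_j⟩) = 2A_{ij} − 1 for all i, j, and let D*_{L2}(A) denote the minimal D such that there exist X, Y ∈ ℝ^{N×D} and β ∈ ℝ with sign(β − ‖x_i − y_j‖) = 2A_{ij} − 1 for all i, j. Then D*_{LPCA}(A) − 2 ≤ D*_{L2}(A) ≤ D*_{LPCA}(A), provided both minima exist. -/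
open Matrix
open scoped RealInnerProductSpace


lemma sign_congr' {a b : ℝ} (h1 : 0 < a ↔ 0 < b) (h2 : a < 0 ↔ b < 0) :
    Real.sign a = Real.sign b := by
  rcases lt_trichotomy a 0 with h|h|h
  · rw [Real.sign_of_neg h, Real.sign_of_neg (h2.1 h)]
  · subst h
    rcases lt_trichotomy b 0 with hb|hb|hb
    · exact absurd (h2.2 hb) (lt_irrefl 0)
    · rw [hb]
    · exact absurd (h1.2 hb) (lt_irrefl 0)
  · rw [Real.sign_of_pos h, Real.sign_of_pos (h1.1 h)]

lemma sign_ne_zero' {s : ℝ} {v : ℝ} (h : Real.sign s = 2 * v - 1) (hv : v = 0 ∨ v = 1) :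
    s ≠ 0 := by
  intro h0
  rw [h0, Real.sign_zero] at h
  rcases hv with hv|hv <;> rw [hv] at h <;> norm_num at h

lemma inner_snoc {n : ℕ} (u v : Fin n → ℝ) (a b c d : ℝ) :
    ⟪(WithLp.equiv 2 (Fin (n+2) → ℝ)).symm (Fin.snoc (Fin.snoc u a) b),
     (WithLp.equiv 2 (Fin (n+2) → ℝ)).symm (Fin.snoc (Fin.snoc v c) d)⟫ =
    (∑ k, u k * v k) + a * c + b * d := by
  simp [PiLp.inner_apply, RCLike.inner_apply, conj_trivial, Fin.sum_univ_castSucc,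
    Fin.snoc_castSucc, Fin.snoc_last]
  rw [Finset.sum_congr rfl fun k _ => mul_comm (v k) (u k)]; ring


theorem stmt_6 {N : ℕ} (A : Matrix (Fin N) (Fin N) ℝ)
    (hA : ∀ i j, A i j = 0 ∨ A i j = 1) (Dlpca Dl2 : ℕ)
    (hlpca : IsLeast {D : ℕ | ∃ X Y : Fin N → EuclideanSpace ℝ (Fin D),
      ∀ i j, Real.sign (⟪X i, Y j⟫) = 2 * A i j - 1} Dlpca)
    (hl2 : IsLeast {D : ℕ | ∃ (X Y : Fin N → EuclideanSpace ℝ (Fin D)) (β : ℝ),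
      ∀ i j, Real.sign (β - ‖X i - Y j‖) = 2 * A i j - 1} Dl2) :
    Dlpca - 2 ≤ Dl2 ∧ Dl2 ≤ Dlpca := by
  constructor
  · -- Dlpca - 2 ≤ Dl2
    obtain ⟨X, Y, β, h⟩ := hl2.1
    by_cases hβ : 0 < β
    · have hmem : Dl2 + 2 ∈ {D : ℕ | ∃ X Y : Fin N → EuclideanSpace ℝ (Fin D),
          ∀ i j, Real.sign (⟪X i, Y j⟫) = 2 * A i j - 1} := by
        refine ⟨fun i => (WithLp.equiv 2 (Fin (Dl2+2) → ℝ)).symm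
            (Fin.snoc (Fin.snoc (fun k => 2 * X i k) (β^2/2 - ‖X i‖^2)) 1),
          fun j => (WithLp.equiv 2 (Fin (Dl2+2) → ℝ)).symm
            (Fin.snoc (Fin.snoc (fun k => Y j k) 1) (β^2/2 - ‖Y j‖^2)), fun i j => ?_⟩
        rw [inner_snoc]
        have hXY : ∑ k, (2 * X i k) * Y j k = 2 * ⟪X i, Y j⟫ := by
          simp [PiLp.inner_apply, RCLike.inner_apply, conj_trivial, Finset.mul_sum]
          exact Finset.sum_congr rfl fun k _ => by ring
        have hsq : ‖X i - Y j‖^2 = ‖X i‖^2 - 2 * ⟪X i, Y j⟫ + ‖Y j‖^2 := norm_sub_sq_real _ _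
        have heq : (∑ k, (2 * X i k) * Y j k) + (β^2/2 - ‖X i‖^2) * 1 +
            1 * (β^2/2 - ‖Y j‖^2) = β^2 - ‖X i - Y j‖^2 := by
          rw [hXY, hsq]; ring
        rw [heq, ← h i j]
        have hr : 0 ≤ ‖X i - Y j‖ := norm_nonneg _
        apply sign_congr'
        · constructor <;> intro hh <;> nlinarith
        · constructor <;> intro hh <;> nlinarith
      have := hlpca.2 hmem
      omega
    · -- β ≤ 0 : all A i j = 0
      push_neg at hβ
      have hA0 : ∀ i j, A i j = (0:ℝ) := by
        intro i j
        have hle : β - ‖X i - Y j‖ ≤ 0 := by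
          have := norm_nonneg (X i - Y j); linarith
        have hs := h i j
        rcases hA i j with hv|hv
        · exact hv
        · exfalso
          rw [hv] at hs
          norm_num at hs
          rcases lt_or_eq_of_le hle with hlt|heq
          · rw [Real.sign_of_neg hlt] at hs; norm_num at hs
          · rw [heq, Real.sign_zero] at hs; norm_num at hs
      have hmem : 1 ∈ {D : ℕ | ∃ X Y : Fin N → EuclideanSpace ℝ (Fin D),
          ∀ i j, Real.sign (⟪X i, Y j⟫) = 2 * A i j - 1} := by
        refine ⟨fun _ => (WithLp.equiv 2 (Fin 1 → ℝ)).symm (fun _ => 1),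
          fun _ => (WithLp.equiv 2 (Fin 1 → ℝ)).symm (fun _ => -1), fun i j => ?_⟩
        rw [hA0 i j]
        have : ⟪(WithLp.equiv 2 (Fin 1 → ℝ)).symm (fun _ => 1 : Fin 1 → ℝ),
            (WithLp.equiv 2 (Fin 1 → ℝ)).symm (fun _ => -1 : Fin 1 → ℝ)⟫ = (-1 : ℝ) := by
          simp [PiLp.inner_apply, RCLike.inner_apply, conj_trivial]
        rw [this]
        rw [Real.sign_of_neg (by norm_num)]
        norm_num
      have := hlpca.2 hmem
      omega
  · -- Dl2 ≤ Dlpca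
    obtain ⟨X, Y, h⟩ := hlpca.1
    apply hl2.2
    refine ⟨fun i => ‖X i‖⁻¹ • X i, fun j => ‖Y j‖⁻¹ • Y j, Real.sqrt 2, fun i j => ?_⟩
    have hs := h i j
    have hne : ⟪X i, Y j⟫ ≠ 0 := sign_ne_zero' hs (hA i j)
    have hX : X i ≠ 0 := by intro h0; rw [h0, inner_zero_left] at hne; exact hne rfl
    have hY : Y j ≠ 0 := by intro h0; rw [h0, inner_zero_right] at hne; exact hne rfl
    have hXn : ‖X i‖ ≠ 0 := norm_ne_zero_iff.mpr hX
    have hYn : ‖Y j‖ ≠ 0 := norm_ne_zero_iff.mpr hY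
    have hXpos : 0 < ‖X i‖ := (norm_nonneg _).lt_of_ne' hXn
    have hYpos : 0 < ‖Y j‖ := (norm_nonneg _).lt_of_ne' hYn
    set t : ℝ := ⟪(‖X i‖⁻¹ • X i : EuclideanSpace ℝ (Fin Dlpca)), ‖Y j‖⁻¹ • Y j⟫ with ht
    have htval : t = ‖X i‖⁻¹ * ‖Y j‖⁻¹ * ⟪X i, Y j⟫ := by
      rw [ht, real_inner_smul_left, real_inner_smul_right]; ring
    have hnx : ‖(‖X i‖⁻¹ • X i : EuclideanSpace ℝ (Fin Dlpca))‖ = 1 := by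
      rw [norm_smul]; simp [abs_of_pos (inv_pos.mpr hXpos), inv_mul_cancel₀ hXn]
    have hny : ‖(‖Y j‖⁻¹ • Y j : EuclideanSpace ℝ (Fin Dlpca))‖ = 1 := by
      rw [norm_smul]; simp [abs_of_pos (inv_pos.mpr hYpos), inv_mul_cancel₀ hYn]
    have hsq : ‖(‖X i‖⁻¹ • X i : EuclideanSpace ℝ (Fin Dlpca)) - ‖Y j‖⁻¹ • Y j‖^2 = 2 - 2 * t := by
      rw [norm_sub_sq_real, hnx, hny, ht]; ring
    rw [← hs]
    set r : ℝ := ‖(‖X i‖⁻¹ • X i : EuclideanSpace ℝ (Fin Dlpca)) - ‖Y j‖⁻¹ • Y j‖ with hr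
    have hr0 : 0 ≤ r := norm_nonneg _
    have hsign_t : (0 < t ↔ 0 < ⟪X i, Y j⟫) ∧ (t < 0 ↔ ⟪X i, Y j⟫ < 0) := by
      constructor <;> constructor <;> intro hh <;> rw [htval] at * <;> nlinarith [inv_pos.mpr hXpos, inv_pos.mpr hYpos, mul_pos (inv_pos.mpr hXpos) (inv_pos.mpr hYpos)]
    have h2 : Real.sqrt 2 ^ 2 = 2 := Real.sq_sqrt (by norm_num)
    have hs2 : 0 < Real.sqrt 2 := Real.sqrt_pos.mpr (by norm_num)
    apply sign_congr'
    · constructor <;> intro hh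
      · apply (hsign_t.1).1; nlinarith
      · have := (hsign_t.1).2 hh
        nlinarith
    · constructor <;> intro hh
      · apply (hsign_t.2).1; nlinarith
      · have := (hsign_t.2).2 hh
        nlinarith
end
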